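/- Fix a cutoff χ as in the context, and for E ≥ 0 and x ≠ 0 let N_{−E}(x) = ∫₀^∞ (e^{ixξ} − χ(ξ))/(ξ+E) dξ. Then there exist constants C > 0 and ε ∈ (0,1) such that |N_{−E}(x) − N_0(x)| ≤ C(E + E^ε (1 + |x|^ε)) for all E ∈ (0,1] and all x ≠ 0. -/

import Mathlib

open MeasureTheory Complex Filter Set
open scoped Topology
open scoped Real ComplexConjugate

noncomputable section

/-- A smooth cutoff function `χ : ℝ → [0,1]` with `χ ≡ 1` on `[-1,1]` and
support contained in `[-2,2]`. -/
def IsCutoff (χ : ℝ → ℝ) : Prop :=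
  ContDiff ℝ (⊤ : ℕ∞) χ ∧ (∀ ξ : ℝ, χ ξ ∈ Set.Icc (0 : ℝ) 1) ∧
    (∀ ξ : ℝ, |ξ| ≤ 1 → χ ξ = 1) ∧ (∀ ξ : ℝ, 2 < |ξ| → χ ξ = 0)

/-- `N_{-E}(x) = ∫₀^∞ (e^{ixξ} - χ(ξ))/(ξ+E) dξ`, as an improper Riemann integral
`lim_{n→∞} ∫₀^n` (which converges for `x ≠ 0`). -/
def Nker (χ : ℝ → ℝ) (E x : ℝ) : ℂ :=
  limUnder atTop fun n : ℝ =>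
    ∫ ξ in (0:ℝ)..n, (Complex.exp (Complex.I * x * ξ) - (χ ξ : ℂ)) / ((ξ : ℂ) + (E : ℂ))

namespace NkerAux

def Fk (χ : ℝ → ℝ) (E x ξ : ℝ) : ℂ :=
  (Complex.exp (Complex.I * x * ξ) - (χ ξ : ℂ)) / ((ξ : ℂ) + (E : ℂ))

lemma norm_exp_Ixξ (x ξ : ℝ) : ‖Complex.exp (Complex.I * x * ξ)‖ = 1 := by
  rw [Complex.norm_exp]
  norm_num [Complex.mul_re, Complex.mul_im]

lemma norm_exp_sub_one_le_two (x ξ : ℝ) : ‖Complex.exp (Complex.I * x * ξ) - 1‖ ≤ 2 := by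
  calc ‖Complex.exp (Complex.I * x * ξ) - 1‖ ≤ ‖Complex.exp (Complex.I * x * ξ)‖ + ‖(1:ℂ)‖ :=
        norm_sub_le _ _
    _ ≤ 2 := by rw [norm_exp_Ixξ]; norm_num

lemma abs_Ixξ (x ξ : ℝ) : ‖Complex.I * x * ξ‖ = |x * ξ| := by
  rw [norm_mul, norm_mul, Complex.norm_I, Complex.norm_real, Complex.norm_real, one_mul,
    Real.norm_eq_abs, Real.norm_eq_abs, abs_mul]

lemma norm_exp_sub_one_le (x ξ : ℝ) (h : |x * ξ| ≤ 1) :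
    ‖Complex.exp (Complex.I * x * ξ) - 1‖ ≤ 2 * |x * ξ| := by
  have := Complex.norm_exp_sub_one_le (x := Complex.I * x * ξ) (by rw [abs_Ixξ]; exact h)
  rw [abs_Ixξ] at this
  exact this

lemma norm_exp_sub_one_le_sqrt (x ξ : ℝ) (hξ : 0 ≤ ξ) :
    ‖Complex.exp (Complex.I * x * ξ) - 1‖ ≤ 2 * (|x| * ξ) ^ ((1:ℝ)/2) := by
  have hx : (0:ℝ) ≤ |x| * ξ := mul_nonneg (abs_nonneg x) hξ
  have habs : |x * ξ| = |x| * ξ := by rw [abs_mul, _root_.abs_of_nonneg hξ]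
  rcases le_or_gt (|x| * ξ) 1 with h1 | h1
  · refine (norm_exp_sub_one_le x ξ (by rwa [habs])).trans ?_
    rw [habs]
    have : |x| * ξ ≤ (|x| * ξ) ^ ((1:ℝ)/2) := by
      nth_rewrite 1 [show |x| * ξ = (|x| * ξ) ^ (1:ℝ) by rw [Real.rpow_one]]
      exact Real.rpow_le_rpow_of_exponent_ge' hx h1 (by norm_num) (by norm_num)
    linarith
  · refine (norm_exp_sub_one_le_two x ξ).trans ?_
    have : (1:ℝ) ≤ (|x| * ξ) ^ ((1:ℝ)/2) :=
      Real.one_le_rpow h1.le (by norm_num)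
    linarith

lemma norm_num_le_two {χ : ℝ → ℝ} (hχ : IsCutoff χ) (x ξ : ℝ) :
    ‖Complex.exp (Complex.I * x * ξ) - (χ ξ : ℂ)‖ ≤ 2 := by
  have h := hχ.2.1 ξ
  calc ‖Complex.exp (Complex.I * x * ξ) - (χ ξ : ℂ)‖
      ≤ ‖Complex.exp (Complex.I * x * ξ)‖ + ‖((χ ξ : ℝ) : ℂ)‖ := norm_sub_le _ _
    _ ≤ 2 := by
        rw [norm_exp_Ixξ, Complex.norm_real, Real.norm_eq_abs, _root_.abs_of_nonneg h.1]
        linarith [h.2]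


lemma norm_den (ξ E : ℝ) (h : 0 ≤ ξ + E) : ‖(ξ:ℂ) + (E:ℂ)‖ = ξ + E := by
  rw [show (ξ:ℂ) + (E:ℂ) = ((ξ + E : ℝ) : ℂ) by push_cast; ring, Complex.norm_real,
    Real.norm_eq_abs, _root_.abs_of_nonneg h]

lemma contOn_Fk {χ : ℝ → ℝ} (hχ : IsCutoff χ) (E x : ℝ) (s : Set ℝ)
    (hs : ∀ ξ ∈ s, ξ + E ≠ 0) : ContinuousOn (Fk χ E x) s := by
  apply ContinuousOn.div
  · exact ((Complex.continuous_exp.comp (by fun_prop)).sub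
      (Complex.continuous_ofReal.comp hχ.1.continuous)).continuousOn
  · fun_prop
  · intro ξ hξ hc
    apply hs ξ hξ
    have : ((ξ + E : ℝ) : ℂ) = 0 := by push_cast; rw [← hc]
    exact_mod_cast this

lemma norm_Fk_le {χ : ℝ → ℝ} (hχ : IsCutoff χ) {E x ξ : ℝ} (hE : 0 ≤ E) (hξ : 0 < ξ) :
    ‖Fk χ E x ξ‖ ≤ 2 * |x| + 2 := by
  have hden : 0 < ξ + E := by linarith
  have hnd : ‖(ξ:ℂ) + (E:ℂ)‖ = ξ + E := norm_den ξ E hden.le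
  rw [Fk, norm_div, hnd]
  rcases le_or_gt ξ 1 with h1 | h1
  · have hχ1 : χ ξ = 1 := hχ.2.2.1 ξ (by rw [_root_.abs_of_nonneg hξ.le]; exact h1)
    rw [hχ1]
    push_cast
    rcases le_or_gt |x * ξ| 1 with h2 | h2
    · have := norm_exp_sub_one_le x ξ h2
      rw [div_le_iff₀ hden]
      have hxx : |x * ξ| = |x| * ξ := by rw [abs_mul, _root_.abs_of_nonneg hξ.le]
      rw [hxx] at this
      nlinarith [abs_nonneg x, norm_nonneg (Complex.exp (Complex.I * x * ξ) - 1)]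
    · have := norm_exp_sub_one_le_two x ξ
      rw [div_le_iff₀ hden]
      have hxx : |x * ξ| = |x| * ξ := by rw [abs_mul, _root_.abs_of_nonneg hξ.le]
      rw [hxx] at h2
      nlinarith [abs_nonneg x]
  · have := norm_num_le_two hχ x ξ
    rw [div_le_iff₀ hden]
    nlinarith [abs_nonneg x]

lemma integrableOn_Fk {χ : ℝ → ℝ} (hχ : IsCutoff χ) {E : ℝ} (x : ℝ) (hE : 0 ≤ E) (n : ℝ) :
    IntegrableOn (Fk χ E x) (Set.Ioc 0 n) := by
  have hmeas : AEStronglyMeasurable (Fk χ E x) (volume.restrict (Set.Ioc 0 n)) := by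
    refine (contOn_Fk hχ E x (Set.Ioc 0 n) ?_).aestronglyMeasurable measurableSet_Ioc
    intro ξ hξ; have := hξ.1; positivity
  refine Integrable.mono' (g := fun _ => (2 * |x| + 2 : ℝ)) ?_ hmeas ?_
  · exact integrableOn_const measure_Ioc_lt_top.ne
  · filter_upwards [ae_restrict_mem measurableSet_Ioc] with ξ hξ
    exact norm_Fk_le hχ hE hξ.1

lemma intervalIntegrable_Fk {χ : ℝ → ℝ} (hχ : IsCutoff χ) {E : ℝ} (x : ℝ) (hE : 0 ≤ E)
    {a b : ℝ} (ha : 0 ≤ a) (hab : a ≤ b) : IntervalIntegrable (Fk χ E x) volume a b := by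
  rw [intervalIntegrable_iff_integrableOn_Ioc_of_le hab]
  exact (integrableOn_Fk hχ x hE b).mono (Set.Ioc_subset_Ioc ha le_rfl) le_rfl


lemma den_ne (E ξ : ℝ) (h : ξ + E ≠ 0) : ((ξ:ℂ) + E) ≠ 0 := by
  intro hc; apply h
  have : ((ξ + E : ℝ) : ℂ) = 0 := by push_cast; rw [← hc]
  exact_mod_cast this

def uFn (E x ξ : ℝ) : ℂ := Complex.exp (Complex.I * x * ξ) / (Complex.I * x * ((ξ:ℂ) + E))
def rFn (E x ξ : ℝ) : ℂ := Complex.exp (Complex.I * x * ξ) / (Complex.I * x * ((ξ:ℂ) + E)^2)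

lemma hasDerivAt_uFn (E x : ℝ) (hx : x ≠ 0) {ξ : ℝ} (hξ : ξ + E ≠ 0) :
    HasDerivAt (uFn E x) (Complex.exp (Complex.I * x * ξ) / ((ξ:ℂ) + E) - rFn E x ξ) ξ := by
  have hIx : (Complex.I * x) ≠ 0 := by
    simp [Complex.I_ne_zero, Complex.ofReal_ne_zero.mpr hx]
  have hden : ((ξ:ℂ) + E) ≠ 0 := den_ne E ξ hξ
  have h1 : HasDerivAt (fun z : ℂ => Complex.exp (Complex.I * x * z))
      (Complex.I * x * Complex.exp (Complex.I * x * ξ)) (ξ:ℂ) := by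
    have := (((hasDerivAt_id (ξ:ℂ)).const_mul (Complex.I * x)).cexp)
    simpa [mul_comm] using this
  have h2 : HasDerivAt (fun z : ℂ => Complex.I * x * (z + E)) (Complex.I * x) (ξ:ℂ) := by
    simpa using ((hasDerivAt_id (ξ:ℂ)).add_const (E:ℂ)).const_mul (Complex.I * x)
  have h3 := h1.div h2 (by exact mul_ne_zero hIx hden)
  have h4 : HasDerivAt (fun ξ' : ℝ => Complex.exp (Complex.I * x * ξ') / (Complex.I * x * ((ξ':ℂ) + E)))
      ((Complex.I * ↑x * Complex.exp (Complex.I * ↑x * ↑ξ) * (Complex.I * ↑x * (↑ξ + ↑E)) -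
          Complex.exp (Complex.I * ↑x * ↑ξ) * (Complex.I * ↑x)) / (Complex.I * ↑x * (↑ξ + ↑E)) ^ 2) ξ :=
    h3.comp_ofReal
  convert h4 using 1
  · rfl
  rw [rFn]
  field_simp [Complex.ofReal_ne_zero.mpr hx]

lemma norm_rFn {E x : ℝ} (hE : 0 ≤ E) (ξ : ℝ) (hξ : 0 ≤ ξ) :
    ‖rFn E x ξ‖ = 1 / (|x| * (ξ + E)^2) := by
  rw [rFn, norm_div, norm_exp_Ixξ, norm_mul, norm_mul, norm_pow, Complex.norm_I, one_mul,
    Complex.norm_real, Real.norm_eq_abs, norm_den ξ E (by linarith)]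

lemma integrableOn_rFn {E x : ℝ} (hE : 0 ≤ E) (hx : x ≠ 0) :
    IntegrableOn (rFn E x) (Ioi (3:ℝ)) := by
  have hmeas : AEStronglyMeasurable (rFn E x) (volume.restrict (Ioi (3:ℝ))) := by
    refine (ContinuousOn.aestronglyMeasurable ?_ measurableSet_Ioi)
    apply ContinuousOn.div
    · exact (Complex.continuous_exp.comp (by fun_prop)).continuousOn
    · fun_prop
    · intro ξ hξ
      have h1 : (3:ℝ) < ξ := hξ
      exact mul_ne_zero (by simp [Complex.I_ne_zero, Complex.ofReal_ne_zero.mpr hx])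
        (pow_ne_zero 2 (den_ne E ξ (by linarith)))
  refine Integrable.mono' (g := fun ξ => |x|⁻¹ * ξ ^ (-2:ℝ)) ?_ hmeas ?_
  · exact (integrableOn_Ioi_rpow_of_lt (by norm_num) (by norm_num : (0:ℝ) < 3)).const_mul _
  · filter_upwards [ae_restrict_mem measurableSet_Ioi] with ξ hξ
    have h3 : (3:ℝ) < ξ := hξ
    have hxpos : 0 < |x| := abs_pos.2 hx
    rw [norm_rFn hE ξ (by linarith)]
    rw [Real.rpow_neg (by linarith), Real.rpow_two]
    rw [div_eq_mul_inv, one_mul, mul_inv]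
    gcongr
    nlinarith

lemma tendsto_uFn {E x : ℝ} (hE : 0 ≤ E) (hx : x ≠ 0) :
    Tendsto (fun n : ℝ => uFn E x n) atTop (𝓝 0) := by
  have hxpos : 0 < |x| := abs_pos.2 hx
  refine squeeze_zero_norm' (a := fun n : ℝ => (|x| * n)⁻¹) ?_ ?_
  · filter_upwards [eventually_gt_atTop (0:ℝ)] with n hn
    have hden : 0 < n + E := by linarith
    rw [uFn, norm_div, norm_exp_Ixξ, norm_mul, norm_mul, Complex.norm_I, one_mul,
      Complex.norm_real, Real.norm_eq_abs, norm_den n E hden.le]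
    rw [one_div, mul_inv, mul_inv]
    gcongr
    linarith
  · exact (Tendsto.const_mul_atTop hxpos tendsto_id).inv_tendsto_atTop


lemma tendsto_intervalIntegral_Fk {χ : ℝ → ℝ} (hχ : IsCutoff χ) {E x : ℝ} (hE : 0 ≤ E)
    (hx : x ≠ 0) :
    Tendsto (fun n : ℝ => ∫ ξ in (0:ℝ)..n, Fk χ E x ξ) atTop
      (𝓝 ((∫ ξ in (0:ℝ)..3, Fk χ E x ξ) + (0 - uFn E x 3) + ∫ ξ in Ioi (3:ℝ), rFn E x ξ)) := by
  have key : ∀ᶠ n in atTop, (∫ ξ in (0:ℝ)..3, Fk χ E x ξ) + (uFn E x n - uFn E x 3)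
      + (∫ ξ in (3:ℝ)..n, rFn E x ξ) = ∫ ξ in (0:ℝ)..n, Fk χ E x ξ := by
    filter_upwards [eventually_ge_atTop (3:ℝ)] with n hn
    have huIcc : Set.uIcc (3:ℝ) n = Set.Icc 3 n := Set.uIcc_of_le hn
    have hne : ∀ ξ ∈ Set.uIcc (3:ℝ) n, ξ + E ≠ 0 := by
      intro ξ hξ
      rw [huIcc] at hξ
      have := hξ.1; positivity
    have hcont_g : ContinuousOn (fun ξ : ℝ => Complex.exp (Complex.I * x * ξ) / ((ξ:ℂ) + E))
        (Set.uIcc (3:ℝ) n) := by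
      apply ContinuousOn.div
      · exact (Complex.continuous_exp.comp (by fun_prop)).continuousOn
      · fun_prop
      · exact fun ξ hξ => den_ne E ξ (hne ξ hξ)
    have hcont_r : ContinuousOn (rFn E x) (Set.uIcc (3:ℝ) n) := by
      apply ContinuousOn.div
      · exact (Complex.continuous_exp.comp (by fun_prop)).continuousOn
      · fun_prop
      · intro ξ hξ
        exact mul_ne_zero (by simp [Complex.I_ne_zero, Complex.ofReal_ne_zero.mpr hx])
          (pow_ne_zero 2 (den_ne E ξ (hne ξ hξ)))
    have hg_II : IntervalIntegrable (fun ξ : ℝ => Complex.exp (Complex.I * x * ξ) / ((ξ:ℂ) + E))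
        volume 3 n := hcont_g.intervalIntegrable
    have hr_II : IntervalIntegrable (rFn E x) volume 3 n := hcont_r.intervalIntegrable
    have step1 : (∫ ξ in (3:ℝ)..n, Fk χ E x ξ)
        = ∫ ξ in (3:ℝ)..n, Complex.exp (Complex.I * x * ξ) / ((ξ:ℂ) + E) := by
      apply intervalIntegral.integral_congr
      intro ξ hξ
      rw [huIcc] at hξ
      have hχ0 : χ ξ = 0 := hχ.2.2.2 ξ (by
        rw [_root_.abs_of_nonneg (by linarith [hξ.1])]
        linarith [hξ.1])
      simp [Fk, hχ0]
    have hd : ∀ ξ ∈ Set.uIcc (3:ℝ) n, HasDerivAt (uFn E x)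
        (Complex.exp (Complex.I * x * ξ) / ((ξ:ℂ) + E) - rFn E x ξ) ξ :=
      fun ξ hξ => hasDerivAt_uFn E x hx (hne ξ hξ)
    have hftc := intervalIntegral.integral_eq_sub_of_hasDerivAt hd (hg_II.sub hr_II)
    rw [intervalIntegral.integral_sub hg_II hr_II] at hftc
    have step2 : (∫ ξ in (3:ℝ)..n, Complex.exp (Complex.I * x * ξ) / ((ξ:ℂ) + E))
        = (uFn E x n - uFn E x 3) + ∫ ξ in (3:ℝ)..n, rFn E x ξ := by
      rw [← hftc]; ring
    have step3 := intervalIntegral.integral_add_adjacent_intervals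
      (intervalIntegrable_Fk hχ x hE (le_refl (0:ℝ)) (by norm_num))
      (intervalIntegrable_Fk hχ x hE (by norm_num) hn)
    rw [← step3, step1, step2]; ring
  refine Tendsto.congr' key ?_
  exact (tendsto_const_nhds.add ((tendsto_uFn hE hx).sub_const _)).add
    (intervalIntegral_tendsto_integral_Ioi 3 (integrableOn_rFn hE hx) tendsto_id)

lemma diff_Fk_eq {χ : ℝ → ℝ} {E ξ : ℝ} (x : ℝ) (hE : 0 < E) (hξ : 0 < ξ) :
    Fk χ E x ξ - Fk χ 0 x ξ
      = (Complex.exp (Complex.I * x * ξ) - (χ ξ : ℂ)) * ((-(E / (ξ * (ξ + E))) : ℝ) : ℂ) := by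
  have h1 : ((ξ:ℝ):ℂ) ≠ 0 := Complex.ofReal_ne_zero.mpr hξ.ne'
  have h2 : ((ξ:ℂ) + (E:ℂ)) ≠ 0 := by
    rw [show (ξ:ℂ) + (E:ℂ) = ((ξ + E : ℝ):ℂ) by push_cast; ring]
    exact Complex.ofReal_ne_zero.mpr (by positivity)
  rw [Fk, Fk]
  push_cast
  rw [add_zero]
  field_simp
  ring

lemma norm_diff_Fk {χ : ℝ → ℝ} {E ξ : ℝ} (x : ℝ) (hE : 0 < E) (hξ : 0 < ξ) :
    ‖Fk χ E x ξ - Fk χ 0 x ξ‖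
      = ‖Complex.exp (Complex.I * x * ξ) - (χ ξ : ℂ)‖ * (E / (ξ * (ξ + E))) := by
  rw [diff_Fk_eq x hE hξ, norm_mul, Complex.norm_real, Real.norm_eq_abs, abs_neg,
    _root_.abs_of_nonneg (by positivity)]

lemma integrableOn_diff {χ : ℝ → ℝ} (hχ : IsCutoff χ) {E : ℝ} (x : ℝ) (hE : 0 < E) :
    IntegrableOn (fun ξ => Fk χ E x ξ - Fk χ 0 x ξ) (Ioi (0:ℝ)) := by
  rw [← Set.Ioc_union_Ioi_eq_Ioi (zero_le_one (α := ℝ))]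
  apply IntegrableOn.union
  · exact (integrableOn_Fk hχ x hE.le 1).sub (integrableOn_Fk hχ x le_rfl 1)
  · have hmeas : AEStronglyMeasurable (fun ξ => Fk χ E x ξ - Fk χ 0 x ξ)
        (volume.restrict (Ioi (1:ℝ))) := by
      refine (ContinuousOn.sub (contOn_Fk hχ E x _ ?_) (contOn_Fk hχ 0 x _ ?_)).aestronglyMeasurable
        measurableSet_Ioi
      · intro ξ hξ; have : (1:ℝ) < ξ := hξ; positivity
      · intro ξ hξ; have : (1:ℝ) < ξ := hξ; positivity
    refine Integrable.mono' (g := fun ξ => (2*E) * ξ^(-2:ℝ))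
      ((integrableOn_Ioi_rpow_of_lt (by norm_num) one_pos).const_mul _) hmeas ?_
    filter_upwards [ae_restrict_mem measurableSet_Ioi] with ξ hξ
    have h1 : (1:ℝ) < ξ := hξ
    have hξ0 : (0:ℝ) < ξ := by linarith
    rw [norm_diff_Fk x hE hξ0]
    have hb := norm_num_le_two hχ x ξ
    have hfrac : E / (ξ * (ξ + E)) ≤ E / ξ^2 := by
      gcongr
      nlinarith
    have h2 : (2*E) * ξ^(-2:ℝ) = 2 * (E / ξ^2) := by
      rw [Real.rpow_neg hξ0.le, Real.rpow_two]
      field_simp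
    rw [h2]
    have hnn : 0 ≤ E / (ξ * (ξ + E)) := by positivity
    nlinarith [norm_nonneg (Complex.exp (Complex.I * x * ξ) - (χ ξ : ℂ))]


lemma norm_diff_restrict {χ : ℝ → ℝ} (hχ : IsCutoff χ) {E x : ℝ} (hE : 0 < E) (hE1 : E ≤ 1)
    {ξ : ℝ} (hξ0 : 0 < ξ) (hξ1 : ξ ≤ 1) :
    ‖Fk χ E x ξ - Fk χ 0 x ξ‖
      ≤ (2 * |x| ^ ((1:ℝ)/2)) * (ξ ^ ((1:ℝ)/2) * (E / (ξ * (ξ + E)))) := by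
  rw [norm_diff_Fk x hE hξ0]
  have hχ1 : χ ξ = 1 := hχ.2.2.1 ξ (by rw [_root_.abs_of_nonneg hξ0.le]; exact hξ1)
  rw [hχ1]
  have hb : ‖Complex.exp (Complex.I * x * ξ) - ((1:ℝ):ℂ)‖ ≤ 2 * (|x| * ξ) ^ ((1:ℝ)/2) := by
    simpa using norm_exp_sub_one_le_sqrt x ξ hξ0.le
  have hmul : (|x| * ξ) ^ ((1:ℝ)/2) = |x| ^ ((1:ℝ)/2) * ξ ^ ((1:ℝ)/2) :=
    Real.mul_rpow (abs_nonneg x) hξ0.le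
  have hnn : 0 ≤ E / (ξ * (ξ + E)) := by positivity
  calc ‖Complex.exp (Complex.I * x * ξ) - ((1:ℝ):ℂ)‖ * (E / (ξ * (ξ + E)))
      ≤ (2 * (|x| * ξ) ^ ((1:ℝ)/2)) * (E / (ξ * (ξ + E))) := by
        exact mul_le_mul_of_nonneg_right hb hnn
    _ = (2 * |x| ^ ((1:ℝ)/2)) * (ξ ^ ((1:ℝ)/2) * (E / (ξ * (ξ + E)))) := by
        rw [hmul]; ring

lemma seg1 {χ : ℝ → ℝ} (hχ : IsCutoff χ) {E : ℝ} (x : ℝ) (hE : 0 < E) (hE1 : E ≤ 1) :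
    (∫ ξ in Ioc (0:ℝ) E, ‖Fk χ E x ξ - Fk χ 0 x ξ‖)
      ≤ 4 * (|x| ^ ((1:ℝ)/2) * E ^ ((1:ℝ)/2)) := by
  have hf : IntegrableOn (fun ξ => ‖Fk χ E x ξ - Fk χ 0 x ξ‖) (Ioc (0:ℝ) E) :=
    IntegrableOn.mono_set ((integrableOn_diff hχ x hE).norm) Set.Ioc_subset_Ioi_self
  have hg : IntegrableOn (fun ξ : ℝ => (2 * |x| ^ ((1:ℝ)/2)) * ξ ^ (-((1:ℝ)/2))) (Ioc (0:ℝ) E) := by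
    rw [← intervalIntegrable_iff_integrableOn_Ioc_of_le hE.le]
    exact (intervalIntegral.intervalIntegrable_rpow' (by norm_num)).const_mul _
  have hmono := setIntegral_mono_on hf hg measurableSet_Ioc ?_
  · refine hmono.trans (le_of_eq ?_)
    rw [← intervalIntegral.integral_of_le hE.le, intervalIntegral.integral_const_mul,
      integral_rpow (Or.inl (by norm_num))]
    have he : -((1:ℝ)/2) + 1 = (1:ℝ)/2 := by norm_num
    rw [he, Real.zero_rpow (by norm_num), sub_zero]
    ring
  · intro ξ hξ
    have hξp : 0 < ξ := hξ.1
    refine (norm_diff_restrict hχ hE hE1 hξ.1 (hξ.2.trans hE1)).trans ?_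
    have hfrac : E / (ξ * (ξ + E)) ≤ ξ⁻¹ := by
      rw [div_le_iff₀ (by positivity), ← mul_assoc]
      have h1 : ξ⁻¹ * ξ = 1 := inv_mul_cancel₀ hξ.1.ne'
      rw [h1, one_mul]
      linarith [hξ.1]
    have hpow : ξ ^ ((1:ℝ)/2) * ξ⁻¹ = ξ ^ (-((1:ℝ)/2)) := by
      rw [← Real.rpow_neg_one ξ, ← Real.rpow_add hξ.1]
      norm_num
    calc (2 * |x| ^ ((1:ℝ)/2)) * (ξ ^ ((1:ℝ)/2) * (E / (ξ * (ξ + E))))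
        ≤ (2 * |x| ^ ((1:ℝ)/2)) * (ξ ^ ((1:ℝ)/2) * ξ⁻¹) := by
          have := Real.rpow_nonneg hξ.1.le ((1:ℝ)/2)
          have h2 : (0:ℝ) ≤ 2 * |x| ^ ((1:ℝ)/2) := by positivity
          exact mul_le_mul_of_nonneg_left (mul_le_mul_of_nonneg_left hfrac this) h2
      _ = (2 * |x| ^ ((1:ℝ)/2)) * ξ ^ (-((1:ℝ)/2)) := by rw [hpow]


lemma seg2 {χ : ℝ → ℝ} (hχ : IsCutoff χ) {E : ℝ} (x : ℝ) (hE : 0 < E) (hE1 : E ≤ 1) :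
    (∫ ξ in Ioc E (1:ℝ), ‖Fk χ E x ξ - Fk χ 0 x ξ‖)
      ≤ 4 * (|x| ^ ((1:ℝ)/2) * E ^ ((1:ℝ)/2)) := by
  have hnm : (0:ℝ) ∉ Set.uIcc E 1 := by
    rw [Set.uIcc_of_le hE1]
    intro h
    exact absurd h.1 (not_le.2 hE)
  have hf : IntegrableOn (fun ξ => ‖Fk χ E x ξ - Fk χ 0 x ξ‖) (Ioc E (1:ℝ)) :=
    IntegrableOn.mono_set ((integrableOn_diff hχ x hE).norm)
      (fun ξ hξ => lt_of_lt_of_le hE hξ.1.le)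
  have hg : IntegrableOn (fun ξ : ℝ => (2 * |x| ^ ((1:ℝ)/2) * E) * ξ ^ (-((3:ℝ)/2)))
      (Ioc E (1:ℝ)) := by
    rw [← intervalIntegrable_iff_integrableOn_Ioc_of_le hE1]
    exact (intervalIntegral.intervalIntegrable_rpow (Or.inr hnm)).const_mul _
  have hmono := setIntegral_mono_on hf hg measurableSet_Ioc ?_
  · refine hmono.trans ?_
    rw [← intervalIntegral.integral_of_le hE1, intervalIntegral.integral_const_mul,
      integral_rpow (Or.inr ⟨by norm_num, hnm⟩)]
    have he : -((3:ℝ)/2) + 1 = -((1:ℝ)/2) := by norm_num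
    rw [he, Real.one_rpow]
    have hEpow : (0:ℝ) < E ^ (-((1:ℝ)/2)) := Real.rpow_pos_of_pos hE _
    have hkey : (2 * |x| ^ ((1:ℝ)/2) * E) * ((1 - E ^ (-((1:ℝ)/2))) / -((1:ℝ)/2))
        ≤ (2 * |x| ^ ((1:ℝ)/2) * E) * (2 * E ^ (-((1:ℝ)/2))) := by
      have hc : (0:ℝ) ≤ 2 * |x| ^ ((1:ℝ)/2) * E := by positivity
      refine mul_le_mul_of_nonneg_left ?_ hc
      have : (1 - E ^ (-((1:ℝ)/2))) / -((1:ℝ)/2) = 2 * E ^ (-((1:ℝ)/2)) - 2 := by ring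
      rw [this]
      linarith
    refine hkey.trans (le_of_eq ?_)
    have hEE : E * E ^ (-((1:ℝ)/2)) = E ^ ((1:ℝ)/2) := by
      nth_rewrite 1 [show E = E ^ (1:ℝ) by rw [Real.rpow_one]]
      rw [← Real.rpow_add hE]
      norm_num
    calc (2 * |x| ^ ((1:ℝ)/2) * E) * (2 * E ^ (-((1:ℝ)/2)))
        = 4 * (|x| ^ ((1:ℝ)/2) * (E * E ^ (-((1:ℝ)/2)))) := by ring
      _ = 4 * (|x| ^ ((1:ℝ)/2) * E ^ ((1:ℝ)/2)) := by rw [hEE]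
  · intro ξ hξ
    have hξp : 0 < ξ := lt_of_lt_of_le hE hξ.1.le
    refine (norm_diff_restrict hχ hE hE1 hξp hξ.2).trans ?_
    have hfrac : E / (ξ * (ξ + E)) ≤ E / ξ^2 := by
      gcongr
      nlinarith
    have hpow : ξ ^ ((1:ℝ)/2) * (E / ξ^2) = E * ξ ^ (-((3:ℝ)/2)) := by
      have key : ξ ^ ((1:ℝ)/2) = ξ^2 * ξ ^ (-((3:ℝ)/2)) := by
        rw [← Real.rpow_natCast ξ 2, ← Real.rpow_add hξp]
        norm_num
      rw [key]
      field_simp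
    calc (2 * |x| ^ ((1:ℝ)/2)) * (ξ ^ ((1:ℝ)/2) * (E / (ξ * (ξ + E))))
        ≤ (2 * |x| ^ ((1:ℝ)/2)) * (ξ ^ ((1:ℝ)/2) * (E / ξ^2)) := by
          have h1 : (0:ℝ) ≤ ξ ^ ((1:ℝ)/2) := Real.rpow_nonneg hξp.le _
          have h2 : (0:ℝ) ≤ 2 * |x| ^ ((1:ℝ)/2) := by positivity
          exact mul_le_mul_of_nonneg_left (mul_le_mul_of_nonneg_left hfrac h1) h2
      _ = (2 * |x| ^ ((1:ℝ)/2) * E) * ξ ^ (-((3:ℝ)/2)) := by rw [hpow]; ring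

lemma seg3 {χ : ℝ → ℝ} (hχ : IsCutoff χ) {E : ℝ} (x : ℝ) (hE : 0 < E) :
    (∫ ξ in Ioi (1:ℝ), ‖Fk χ E x ξ - Fk χ 0 x ξ‖) ≤ 2 * E := by
  have hf : IntegrableOn (fun ξ => ‖Fk χ E x ξ - Fk χ 0 x ξ‖) (Ioi (1:ℝ)) :=
    IntegrableOn.mono_set ((integrableOn_diff hχ x hE).norm)
      (Set.Ioi_subset_Ioi (by norm_num))
  have hg : IntegrableOn (fun ξ : ℝ => (2*E) * ξ ^ (-(2:ℝ))) (Ioi (1:ℝ)) :=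
    (integrableOn_Ioi_rpow_of_lt (by norm_num) one_pos).const_mul _
  have hmono := setIntegral_mono_on hf hg measurableSet_Ioi ?_
  · refine hmono.trans ?_
    rw [integral_const_mul, integral_Ioi_rpow_of_lt (by norm_num) one_pos]
    norm_num
  · intro ξ hξ
    have h1 : (1:ℝ) < ξ := hξ
    have hξ0 : (0:ℝ) < ξ := by linarith
    rw [norm_diff_Fk x hE hξ0]
    have hb := norm_num_le_two hχ x ξ
    have hfrac : E / (ξ * (ξ + E)) ≤ E / ξ^2 := by
      gcongr
      nlinarith
    have h2 : (2*E) * ξ^(-(2:ℝ)) = 2 * (E / ξ^2) := by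
      rw [Real.rpow_neg hξ0.le, Real.rpow_two]
      field_simp
    rw [h2]
    have hnn : 0 ≤ E / (ξ * (ξ + E)) := by positivity
    nlinarith [norm_nonneg (Complex.exp (Complex.I * x * ξ) - (χ ξ : ℂ))]


lemma norm_integral_diff_le {χ : ℝ → ℝ} (hχ : IsCutoff χ) {E : ℝ} (x : ℝ)
    (hE : 0 < E) (hE1 : E ≤ 1) :
    ‖∫ ξ in Ioi (0:ℝ), (Fk χ E x ξ - Fk χ 0 x ξ)‖
      ≤ 2 * E + 8 * (|x| ^ ((1:ℝ)/2) * E ^ ((1:ℝ)/2)) := by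
  have hInt := integrableOn_diff hχ x hE
  refine (norm_integral_le_integral_norm _).trans ?_
  have hIntN : IntegrableOn (fun ξ => ‖Fk χ E x ξ - Fk χ 0 x ξ‖) (Ioi (0:ℝ)) := hInt.norm
  have s1 : Ioc (0:ℝ) E ∪ Ioi E = Ioi 0 := Set.Ioc_union_Ioi_eq_Ioi hE.le
  have s2 : Ioc E (1:ℝ) ∪ Ioi 1 = Ioi E := Set.Ioc_union_Ioi_eq_Ioi hE1
  have d1 : Disjoint (Ioc (0:ℝ) E) (Ioi E) := by
    rw [Set.disjoint_left]; rintro a ⟨_, h1⟩ h2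
    exact absurd (Set.mem_Ioi.mp h2) (not_lt.2 h1)
  have d2 : Disjoint (Ioc E (1:ℝ)) (Ioi 1) := by
    rw [Set.disjoint_left]; rintro a ⟨_, h1⟩ h2
    exact absurd (Set.mem_Ioi.mp h2) (not_lt.2 h1)
  have i1 : IntegrableOn (fun ξ => ‖Fk χ E x ξ - Fk χ 0 x ξ‖) (Ioc (0:ℝ) E) :=
    hIntN.mono_set Set.Ioc_subset_Ioi_self
  have i4 : IntegrableOn (fun ξ => ‖Fk χ E x ξ - Fk χ 0 x ξ‖) (Ioi E) :=
    hIntN.mono_set (Set.Ioi_subset_Ioi hE.le)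
  have i2 : IntegrableOn (fun ξ => ‖Fk χ E x ξ - Fk χ 0 x ξ‖) (Ioc E (1:ℝ)) :=
    hIntN.mono_set (fun ξ hξ => lt_trans hE hξ.1)
  have i3 : IntegrableOn (fun ξ => ‖Fk χ E x ξ - Fk χ 0 x ξ‖) (Ioi (1:ℝ)) :=
    hIntN.mono_set (Set.Ioi_subset_Ioi (by norm_num))
  rw [← s1, setIntegral_union d1 measurableSet_Ioi i1 i4]
  rw [← s2, setIntegral_union d2 measurableSet_Ioi i2 i3]
  have b1 := seg1 hχ x hE hE1
  have b2 := seg2 hχ x hE hE1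
  have b3 := seg3 hχ x hE
  linarith

end NkerAux

/-- Bound for `N_{-E} - N_0`: there are `C > 0` and `ε ∈ (0,1)` such that
`|N_{-E}(x) - N_0(x)| ≤ C (E + E^ε (1 + |x|^ε))` for all `E ∈ (0,1]` and all `x ≠ 0`. -/
theorem N_difference_bound (χ : ℝ → ℝ) (hχ : IsCutoff χ) :
    ∃ C : ℝ, 0 < C ∧ ∃ ε : ℝ, 0 < ε ∧ ε < 1 ∧
      ∀ E : ℝ, 0 < E → E ≤ 1 → ∀ x : ℝ, x ≠ 0 →
        ‖Nker χ E x - Nker χ 0 x‖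
          ≤ C * (E + E ^ ε * (1 + (_root_.abs x) ^ ε)) := by

  refine ⟨8, by norm_num, 1/2, by norm_num, by norm_num, ?_⟩
  intro E hE hE1 x hx
  have hTE := NkerAux.tendsto_intervalIntegral_Fk hχ hE.le hx
  have hT0 := NkerAux.tendsto_intervalIntegral_Fk hχ (le_refl (0:ℝ)) hx
  have hNE : Nker χ E x = (∫ ξ in (0:ℝ)..3, NkerAux.Fk χ E x ξ) + (0 - NkerAux.uFn E x 3)
      + ∫ ξ in Ioi (3:ℝ), NkerAux.rFn E x ξ := hTE.limUnder_eq
  have hN0 : Nker χ 0 x = (∫ ξ in (0:ℝ)..3, NkerAux.Fk χ 0 x ξ) + (0 - NkerAux.uFn 0 x 3)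
      + ∫ ξ in Ioi (3:ℝ), NkerAux.rFn 0 x ξ := hT0.limUnder_eq
  have hdiffT := hTE.sub hT0
  have heq : ∀ᶠ n in atTop, (∫ ξ in (0:ℝ)..n, NkerAux.Fk χ E x ξ)
      - (∫ ξ in (0:ℝ)..n, NkerAux.Fk χ 0 x ξ)
      = ∫ ξ in (0:ℝ)..n, (NkerAux.Fk χ E x ξ - NkerAux.Fk χ 0 x ξ) := by
    filter_upwards [eventually_ge_atTop (0:ℝ)] with n hn
    rw [← intervalIntegral.integral_sub
      (NkerAux.intervalIntegrable_Fk hχ x hE.le le_rfl hn)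
      (NkerAux.intervalIntegrable_Fk hχ x le_rfl le_rfl hn)]
  have hT2 := intervalIntegral_tendsto_integral_Ioi 0
    (NkerAux.integrableOn_diff hχ x hE) tendsto_id
  have hkey := tendsto_nhds_unique (hdiffT.congr' heq) hT2
  have hbound := NkerAux.norm_integral_diff_le hχ x hE hE1
  rw [hNE, hN0, hkey]
  refine hbound.trans ?_
  have h1 : (0:ℝ) ≤ E ^ ((1:ℝ)/2) := Real.rpow_nonneg hE.le _
  have h2 : (0:ℝ) ≤ |x| ^ ((1:ℝ)/2) := Real.rpow_nonneg (abs_nonneg x) _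
  have h3 : E ^ ((1:ℝ)/2) * (1 + |x| ^ ((1:ℝ)/2))
      = E ^ ((1:ℝ)/2) + E ^ ((1:ℝ)/2) * |x| ^ ((1:ℝ)/2) := by ring
  calc 2 * E + 8 * (|x| ^ ((1:ℝ)/2) * E ^ ((1:ℝ)/2))
      ≤ 8 * (E + (E ^ ((1:ℝ)/2) + E ^ ((1:ℝ)/2) * |x| ^ ((1:ℝ)/2))) := by nlinarith
    _ = 8 * (E + E ^ ((1:ℝ)/2) * (1 + |x| ^ ((1:ℝ)/2))) := by ring

end
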